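/- (Theorem 2.) There exist γ₀ > 0 and μ̂₀ > 0 such that for every γ ∈ [0, γ₀] (so B + γC is invertible) and every step-size sequence (μ_k)_{k≥1} with 0 < μ_k ≤ μ̂₀ for all k, Σ_{k=1}^∞ μ_k = ∞ and Σ_{k=1}^∞ μ_k² < ∞, the error process satisfies lim_{k→∞} E[e^k (e^k)ᵀ] = 0. -/

import Mathlib

/-! Write `Ψ = (B + γC)⁻¹`. The recursion reads `e^k = (I - μ_k Ψ A) e^{k-1} + μ_k Ψ ξ_k` with
`ξ_k = θ^k - Ω_k (û + e^{k-1})`. By compactness of the unit sphere `B⁻¹A` is coercive, and by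
continuity of the inverse `Ψ A` stays uniformly coercive and `Ψ` uniformly bounded for small `γ`,
so for small steps `I - μ Ψ A` shrinks `‖x‖²` by a factor `1 - μ c`. Since `(θ^k, Ω_k)` is
centred and independent of `e^{k-1}`, the cross term has mean zero, and the noise has second
moment `O(1 + E‖e^{k-1}‖²)`. Thus `f_k = E‖e^k‖²` obeys `f_k ≤ (1 - a μ_k) f_{k-1} + K μ_k²`;
such a sequence converges (it is decreasing up to a summable error), and its limit vanishes
because `Σ μ_k f_{k-1} < ∞` while `Σ μ_k = ∞`. Every entry of `E[e^k (e^k)ᵀ]` is at most `f_k`.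
-/

open MeasureTheory ProbabilityTheory Matrix Filter

/-- Measurable-space structure on matrices (entrywise). -/
instance matrixMeasurableSpace {m n α : Type*} [MeasurableSpace α] :
    MeasurableSpace (Matrix m n α) := MeasurableSpace.pi (X := fun _ : m => n → α)

/-- The Euclidean norm of a vector. -/
noncomputable def euclNorm {ι : Type*} [Fintype ι] (v : ι → ℝ) : ℝ :=
  Real.sqrt (∑ i, (v i) ^ 2)

/-- The Frobenius norm of a matrix. -/
noncomputable def frobNorm {ι κ : Type*} [Fintype ι] [Fintype κ] (F : Matrix ι κ ℝ) : ℝ :=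
  Real.sqrt (∑ i, ∑ j, (F i j) ^ 2)

/-- Entrywise expectation of a random vector. -/
noncomputable def Evec {Ω' : Type*} [MeasurableSpace Ω'] (P : Measure Ω') {ι : Type*}
    (F : Ω' → ι → ℝ) : ι → ℝ := fun i => ∫ ω, F ω i ∂P

/-- Entrywise expectation of a random matrix. -/
noncomputable def Emat {Ω' : Type*} [MeasurableSpace Ω'] (P : Measure Ω') {ι κ : Type*}
    (F : Ω' → Matrix ι κ ℝ) : Matrix ι κ ℝ := Matrix.of fun i j => ∫ ω, F ω i j ∂P

/-- Entrywise integrability of a random vector. -/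
def IntV {Ω' : Type*} [MeasurableSpace Ω'] (P : Measure Ω') {ι : Type*}
    (F : Ω' → ι → ℝ) : Prop := ∀ i, Integrable (fun ω => F ω i) P

/-- Entrywise integrability of a random matrix. -/
def IntM {Ω' : Type*} [MeasurableSpace Ω'] (P : Measure Ω') {ι κ : Type*}
    (F : Ω' → Matrix ι κ ℝ) : Prop := ∀ i j, Integrable (fun ω => F ω i j) P

/-- `vec(P) vec(Q)ᵀ`, with `vec` stacking the columns of a square matrix. -/
def vecOuter {M : ℕ} (P Q : Matrix (Fin M) (Fin M) ℝ) :
    Matrix (Fin M × Fin M) (Fin M × Fin M) ℝ :=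
  Matrix.of fun p q => P p.1 p.2 * Q q.1 q.2

/-- `vec(P) vᵀ` for a square matrix `P` and a vector `v`. -/
def vecOuterVec {M : ℕ} (P : Matrix (Fin M) (Fin M) ℝ) (v : Fin M → ℝ) :
    Matrix (Fin M × Fin M) (Fin M) ℝ :=
  Matrix.of fun p i => P p.1 p.2 * v i

section LinearAlgebra

open Finset

variable {ι κ : Type*} [Fintype ι] [Fintype κ]

theorem sq_frobNorm (X : Matrix ι κ ℝ) :
    frobNorm X ^ 2 = ∑ i, ∑ j, X i j ^ 2 :=
  Real.sq_sqrt (sum_nonneg fun _ _ => sum_nonneg fun _ _ => sq_nonneg _)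

theorem frobNorm_nonneg (X : Matrix ι κ ℝ) :
    0 ≤ frobNorm X :=
  Real.sqrt_nonneg _

theorem abs_le_frobNorm (X : Matrix ι κ ℝ)
    (i : ι) (j : κ) : |X i j| ≤ frobNorm X := by
  refine abs_le_of_sq_le_sq ?_ (frobNorm_nonneg X)
  rw [sq_frobNorm]
  calc X i j ^ 2 ≤ ∑ j', X i j' ^ 2 :=
        single_le_sum (f := fun j' => X i j' ^ 2) (fun _ _ => sq_nonneg _) (mem_univ j)
    _ ≤ ∑ i', ∑ j', X i' j' ^ 2 :=
        single_le_sum (f := fun i' => ∑ j', X i' j' ^ 2)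
          (fun _ _ => sum_nonneg fun _ _ => sq_nonneg _) (mem_univ i)

theorem continuous_frobNorm :
    Continuous (frobNorm : Matrix ι κ ℝ → ℝ) := by
  unfold frobNorm
  fun_prop

theorem dotProduct_self_nonneg (v : ι → ℝ) : 0 ≤ v ⬝ᵥ v :=
  Finset.sum_nonneg fun i _ => mul_self_nonneg (v i)

theorem euclNorm_eq_norm_toLp (v : ι → ℝ) :
    euclNorm v = ‖WithLp.toLp 2 v‖ := by
  simp [euclNorm, EuclideanSpace.norm_eq]

theorem sq_norm_toLp (v : ι → ℝ) :
    ‖WithLp.toLp 2 v‖ ^ 2 = v ⬝ᵥ v := by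
  rw [EuclideanSpace.real_norm_sq_eq]
  simp [dotProduct, sq]

theorem mulVec_dotProduct_mulVec_le
    (X : Matrix ι κ ℝ) (v : κ → ℝ) :
    X *ᵥ v ⬝ᵥ X *ᵥ v ≤ frobNorm X ^ 2 * (v ⬝ᵥ v) := by
  have hrow (i : ι) : (X *ᵥ v) i * (X *ᵥ v) i ≤ (∑ j, X i j ^ 2) * ∑ j, v j ^ 2 := by
    rw [← sq]; exact sum_mul_sq_le_sq_mul_sq _ _ _
  calc X *ᵥ v ⬝ᵥ X *ᵥ v ≤ ∑ i, (∑ j, X i j ^ 2) * ∑ j, v j ^ 2 := sum_le_sum fun i _ => hrow i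
    _ = frobNorm X ^ 2 * (v ⬝ᵥ v) := by
        rw [sq_frobNorm, ← sum_mul]; simp [dotProduct, sq]

theorem sq_dotProduct_le (v w : ι → ℝ) :
    (v ⬝ᵥ w) ^ 2 ≤ (v ⬝ᵥ v) * (w ⬝ᵥ w) := by
  simpa [dotProduct, sq] using Finset.sum_mul_sq_le_sq_mul_sq Finset.univ v w

theorem abs_dotProduct_mulVec_le (X : Matrix ι ι ℝ) (v : ι → ℝ) :
    |v ⬝ᵥ X *ᵥ v| ≤ frobNorm X * (v ⬝ᵥ v) := by
  have hv := dotProduct_self_nonneg v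
  refine abs_le_of_sq_le_sq ?_ (mul_nonneg (frobNorm_nonneg X) hv)
  calc (v ⬝ᵥ X *ᵥ v) ^ 2 ≤ (v ⬝ᵥ v) * (X *ᵥ v ⬝ᵥ X *ᵥ v) := sq_dotProduct_le _ _
    _ ≤ (v ⬝ᵥ v) * (frobNorm X ^ 2 * (v ⬝ᵥ v)) := by
        gcongr; exact mulVec_dotProduct_mulVec_le X v
    _ = (frobNorm X * (v ⬝ᵥ v)) ^ 2 := by ring

theorem abs_mul_le_dotProduct_self (v : ι → ℝ) (i j : ι) :
    |v i * v j| ≤ v ⬝ᵥ v := by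
  have hsq (k : ι) : v k ^ 2 ≤ v ⬝ᵥ v := by
    simpa [dotProduct, sq] using
      Finset.single_le_sum (f := fun l => v l * v l) (fun l _ => mul_self_nonneg (v l))
        (Finset.mem_univ k)
  rw [abs_mul]
  nlinarith [hsq i, hsq j, sq_abs (v i), sq_abs (v j), sq_nonneg (|v i| - |v j|)]

theorem add_dotProduct_add_le (v w : ι → ℝ) :
    (v + w) ⬝ᵥ (v + w) ≤ 2 * (v ⬝ᵥ v) + 2 * (w ⬝ᵥ w) := by
  have := dotProduct_self_nonneg (v - w)
  simp only [add_dotProduct, dotProduct_add, sub_dotProduct, dotProduct_sub,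
    dotProduct_comm w v] at this ⊢
  linarith

theorem sub_dotProduct_sub_le (v w : ι → ℝ) :
    (v - w) ⬝ᵥ (v - w) ≤ 2 * (v ⬝ᵥ v) + 2 * (w ⬝ᵥ w) := by
  simpa [sub_eq_add_neg] using add_dotProduct_add_le v (-w)

theorem one_sub_smul_mulVec_dotProduct_le [DecidableEq ι]
    (T : Matrix ι ι ℝ) (x : ι → ℝ) {c μ : ℝ} (hcoer : c * (x ⬝ᵥ x) ≤ x ⬝ᵥ T *ᵥ x)
    (hμ : 0 ≤ μ) (hμT : μ * frobNorm T ^ 2 ≤ c) :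
    (1 - μ • T) *ᵥ x ⬝ᵥ (1 - μ • T) *ᵥ x ≤ (1 - μ * c) * (x ⬝ᵥ x) := by
  have hT := mulVec_dotProduct_mulVec_le T x
  have hx := dotProduct_self_nonneg x
  have hexp : (1 - μ • T) *ᵥ x ⬝ᵥ (1 - μ • T) *ᵥ x
      = x ⬝ᵥ x - 2 * μ * (x ⬝ᵥ T *ᵥ x) + μ ^ 2 * (T *ᵥ x ⬝ᵥ T *ᵥ x) := by
    simp only [sub_mulVec, one_mulVec, smul_mulVec, sub_dotProduct, dotProduct_sub,
      smul_dotProduct, dotProduct_smul, smul_eq_mul, dotProduct_comm (T *ᵥ x) x]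
    ring
  rw [hexp]
  nlinarith [mul_le_mul_of_nonneg_left hT (sq_nonneg μ),
    mul_le_mul_of_nonneg_right hμT (mul_nonneg hμ hx), mul_le_mul_of_nonneg_left hcoer hμ]

theorem exists_pos_mul_dotProduct_le_dotProduct_mulVec
    (T : Matrix ι ι ℝ) (hT : ∀ x : ι → ℝ, euclNorm x = 1 → 0 < x ⬝ᵥ T *ᵥ x) :
    ∃ c, 0 < c ∧ ∀ x, c * (x ⬝ᵥ x) ≤ x ⬝ᵥ T *ᵥ x := by
  set q : EuclideanSpace ℝ ι → ℝ := fun y => y.ofLp ⬝ᵥ T *ᵥ y.ofLp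
  have hq : Continuous q := by fun_prop
  obtain ⟨c, hc, hcq⟩ := (isCompact_sphere (0 : EuclideanSpace ℝ ι) 1).exists_forall_le'
    hq.continuousOn (a := 0) fun y hy => hT y.ofLp (by simpa [euclNorm_eq_norm_toLp] using hy)
  refine ⟨c, hc, fun x => ?_⟩
  rcases eq_or_ne x 0 with rfl | hx
  · simp
  set t := ‖WithLp.toLp 2 x‖
  have ht : 0 < t := norm_pos_iff.2 (by simpa using hx)
  have hsphere := hcq (t⁻¹ • WithLp.toLp 2 x) (by simp [norm_smul, t, ht.ne'])
  have hscale : q (t⁻¹ • WithLp.toLp 2 x) = (t ^ 2)⁻¹ * (x ⬝ᵥ T *ᵥ x) := by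
    simp only [q, WithLp.ofLp_smul, mulVec_smul, smul_dotProduct, dotProduct_smul, smul_eq_mul]
    field_simp
  rw [← sq_norm_toLp, mul_comm]
  rw [hscale, le_inv_mul_iff₀ (by positivity)] at hsphere
  exact hsphere

theorem half_mul_dotProduct_le_of_frobNorm_sub_le
    {T T' : Matrix ι ι ℝ} {c : ℝ} (hcoer : ∀ x, c * (x ⬝ᵥ x) ≤ x ⬝ᵥ T *ᵥ x)
    (hTT' : frobNorm (T' - T) ≤ c / 2) (x : ι → ℝ) :
    c / 2 * (x ⬝ᵥ x) ≤ x ⬝ᵥ T' *ᵥ x := by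
  have hdiff := (abs_le.1 (abs_dotProduct_mulVec_le (T' - T) x)).1
  have hx := dotProduct_self_nonneg x
  rw [sub_mulVec, dotProduct_sub] at hdiff
  nlinarith [hcoer x, mul_le_mul_of_nonneg_right hTT' hx]

theorem continuousAt_inv_add_smul [DecidableEq ι]
    (B C : Matrix ι ι ℝ) (hB : IsUnit B) : ContinuousAt (fun γ : ℝ => (B + γ • C)⁻¹) 0 := by
  have hdet : (B + (0 : ℝ) • C).det ≠ 0 := by
    simpa using (isUnit_iff_isUnit_det B).1 hB |>.ne_zero
  refine ContinuousAt.comp (g := Inv.inv) ?_ (by fun_prop)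
  refine continuousAt_matrix_inv _ ?_
  simpa [Ring.inverse_eq_inv'] using continuousAt_inv₀ hdet

theorem exists_uniform_bounds_inv_add_smul [DecidableEq ι]
    (A B C : Matrix ι ι ℝ) (hB : IsUnit B) {c : ℝ} (hc : 0 < c)
    (hcoer : ∀ x, c * (x ⬝ᵥ x) ≤ x ⬝ᵥ (B⁻¹ * A) *ᵥ x) :
    ∃ γ₀, 0 < γ₀ ∧ ∃ L R : ℝ, ∀ γ : ℝ, 0 ≤ γ → γ ≤ γ₀ →
      IsUnit (B + γ • C) ∧ (∀ x, c / 2 * (x ⬝ᵥ x) ≤ x ⬝ᵥ ((B + γ • C)⁻¹ * A) *ᵥ x) ∧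
        frobNorm ((B + γ • C)⁻¹ * A) ≤ L ∧ frobNorm (B + γ • C)⁻¹ ≤ R := by
  have hΨ := continuousAt_inv_add_smul B C hB
  have hT : ContinuousAt (fun γ : ℝ => (B + γ • C)⁻¹ * A) 0 := hΨ.mul continuousAt_const
  have hunit : ∀ᶠ γ : ℝ in nhds 0, (B + γ • C).det ≠ 0 :=
    (show Continuous fun γ : ℝ => (B + γ • C).det by fun_prop).continuousAt.eventually_ne
      (by simpa using ((isUnit_iff_isUnit_det B).1 hB).ne_zero)
  have hnear : ∀ᶠ γ : ℝ in nhds 0, frobNorm ((B + γ • C)⁻¹ * A - B⁻¹ * A) < c / 2 :=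
    (continuous_frobNorm.continuousAt.comp (hT.sub continuousAt_const)).eventually_lt
      continuousAt_const (by simpa [frobNorm] using half_pos hc)
  have hTbound := (continuous_frobNorm.continuousAt.comp hT).eventually_lt
    (continuousAt_const (y := frobNorm (B⁻¹ * A) + 1)) (by simp)
  have hΨbound := (continuous_frobNorm.continuousAt.comp hΨ).eventually_lt
    (continuousAt_const (y := frobNorm B⁻¹ + 1)) (by simp)
  obtain ⟨δ, hδ, hball⟩ := Metric.eventually_nhds_iff.1
    (hunit.and (hnear.and (hTbound.and hΨbound)))
  refine ⟨δ / 2, half_pos hδ, frobNorm (B⁻¹ * A) + 1, frobNorm B⁻¹ + 1, fun γ hγ hγδ => ?_⟩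
  obtain ⟨hdet, hclose, hTγ, hΨγ⟩ :=
    hball (show dist γ 0 < δ by rw [Real.dist_0_eq_abs, abs_of_nonneg hγ]; linarith)
  exact ⟨(isUnit_iff_isUnit_det _).2 hdet.isUnit,
    half_mul_dotProduct_le_of_frobNorm_sub_le hcoer hclose.le, hTγ.le, hΨγ.le⟩

theorem add_smul_mulVec_dotProduct_le (G Ψ : Matrix ι ι ℝ)
    (x v : ι → ℝ) {μ ρ : ℝ} (hG : G *ᵥ x ⬝ᵥ G *ᵥ x ≤ ρ * (x ⬝ᵥ x)) :
    (G *ᵥ x + μ • Ψ *ᵥ v) ⬝ᵥ (G *ᵥ x + μ • Ψ *ᵥ v) ≤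
      ρ * (x ⬝ᵥ x) + 2 * μ * ((Ψᵀ * G) *ᵥ x ⬝ᵥ v) + μ ^ 2 * (frobNorm Ψ ^ 2 * (v ⬝ᵥ v)) := by
  have hcross : G *ᵥ x ⬝ᵥ Ψ *ᵥ v = (Ψᵀ * G) *ᵥ x ⬝ᵥ v := by
    rw [dotProduct_mulVec, ← mulVec_transpose, mulVec_mulVec]
  have hexp : (G *ᵥ x + μ • Ψ *ᵥ v) ⬝ᵥ (G *ᵥ x + μ • Ψ *ᵥ v) =
      G *ᵥ x ⬝ᵥ G *ᵥ x + 2 * μ * (G *ᵥ x ⬝ᵥ Ψ *ᵥ v) + μ ^ 2 * (Ψ *ᵥ v ⬝ᵥ Ψ *ᵥ v) := by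
    simp only [add_dotProduct, dotProduct_add, smul_dotProduct, dotProduct_smul, smul_eq_mul,
      dotProduct_comm (Ψ *ᵥ v) (G *ᵥ x)]
    ring
  rw [hexp, hcross]
  linarith [mul_le_mul_of_nonneg_left (mulVec_dotProduct_mulVec_le Ψ v) (sq_nonneg μ)]

theorem mulVec_dotProduct_mulVec_eq (W : Matrix ι κ ℝ)
    (y : κ → ℝ) : W *ᵥ y ⬝ᵥ W *ᵥ y = y ⬝ᵥ (Wᵀ * W) *ᵥ y := by
  rw [← mulVec_mulVec, dotProduct_mulVec y Wᵀ, vecMul_transpose]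

theorem one_sub_smul_mul_add_mulVec_eq [DecidableEq ι]
    (A Ψ W : Matrix ι ι ℝ) (x t u : ι → ℝ) (μ : ℝ) :
    (1 - μ • (Ψ * (A + W))) *ᵥ x + μ • Ψ *ᵥ (t - W *ᵥ u) =
      (1 - μ • (Ψ * A)) *ᵥ x + μ • Ψ *ᵥ (t - W *ᵥ (u + x)) := by
  simp only [Matrix.mul_add, smul_add, sub_mulVec, add_mulVec, smul_mulVec, ← mulVec_mulVec,
    mulVec_sub, mulVec_add, smul_sub]
  abel

end LinearAlgebra

section RobbinsSiegmund

open Finset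

theorem exists_tendsto_of_le_add_of_summable {f g : ℕ → ℝ} (hf : ∀ n, 0 ≤ f n)
    (hg : ∀ n, 0 ≤ g n) (hgs : Summable g) (hle : ∀ n, f (n + 1) ≤ f n + g n) :
    ∃ L, Tendsto f atTop (nhds L) := by
  set h : ℕ → ℝ := fun n => f n - ∑ i ∈ range n, g i
  have hanti : Antitone h := antitone_nat_of_succ_le fun n => by
    simp only [h, sum_range_succ]; linarith [hle n]
  have hbdd : BddBelow (Set.range h) := by
    refine ⟨-∑' i, g i, ?_⟩
    rintro _ ⟨n, rfl⟩
    linarith [hf n, hgs.sum_le_tsum (range n) fun i _ => hg i]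
  refine ⟨_, ((tendsto_atTop_ciInf hanti hbdd).add hgs.hasSum.tendsto_sum_nat).congr fun n => ?_⟩
  simp [h]

theorem summable_mul_of_le_one_sub_mul_add_sq {f μ : ℕ → ℝ} {a K : ℝ} (ha : 0 < a)
    (hK : 0 ≤ K) (hf : ∀ n, 0 ≤ f n) (hμ : ∀ n, 0 ≤ μ n)
    (hrec : ∀ n, f (n + 1) ≤ (1 - a * μ n) * f n + K * μ n ^ 2)
    (hsq : Summable fun n => μ n ^ 2) :
    Summable fun n => μ n * f n := by
  have hstep (n : ℕ) : a * (μ n * f n) ≤ f n - f (n + 1) + K * μ n ^ 2 := by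
    linarith [hrec n, show (1 - a * μ n) * f n = f n - a * (μ n * f n) by ring]
  refine summable_of_sum_range_le (c := (f 0 + K * ∑' n, μ n ^ 2) / a)
    (fun n => mul_nonneg (hμ n) (hf n)) fun N => ?_
  rw [le_div_iff₀ ha]
  have htel := sum_le_sum fun n (_ : n ∈ range N) => hstep n
  rw [← mul_sum, sum_add_distrib, sum_range_sub', ← mul_sum] at htel
  have htail := hsq.sum_le_tsum (range N) fun n _ => sq_nonneg (μ n)
  nlinarith [hf N, mul_le_mul_of_nonneg_left htail hK]

theorem tendsto_zero_of_le_one_sub_mul_add_sq {f μ : ℕ → ℝ} {a K : ℝ} (ha : 0 < a)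
    (hf : ∀ n, 0 ≤ f n) (hμ : ∀ n, 0 ≤ μ n)
    (hrec : ∀ n, f (n + 1) ≤ (1 - a * μ n) * f n + K * μ n ^ 2)
    (hdiv : ¬ Summable μ) (hsq : Summable fun n => μ n ^ 2) :
    Tendsto f atTop (nhds 0) := by
  have hrec' (n : ℕ) : f (n + 1) ≤ (1 - a * μ n) * f n + max K 0 * μ n ^ 2 :=
    (hrec n).trans (by gcongr; exact le_max_left K 0)
  have hK := le_max_right K 0
  obtain ⟨L, hL⟩ := exists_tendsto_of_le_add_of_summable hf
    (fun n => mul_nonneg hK (sq_nonneg (μ n))) (hsq.mul_left _)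
    fun n => by nlinarith [hrec' n, mul_nonneg (mul_nonneg ha.le (hμ n)) (hf n)]
  obtain rfl | hLpos := (ge_of_tendsto' hL hf).eq_or_lt
  · exact hL
  -- once `f ≥ L / 2`, divergence of `∑ μ` contradicts summability of `∑ μ f`
  refine absurd (((summable_mul_of_le_one_sub_mul_add_sq ha hK hf hμ hrec' hsq).mul_left
    (2 / L)).of_norm_bounded_eventually_nat ?_) hdiv
  filter_upwards [hL.eventually (lt_mem_nhds (half_lt_self hLpos))] with n hn
  rw [Real.norm_of_nonneg (hμ n), div_mul_eq_mul_div, le_div_iff₀ hLpos]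
  nlinarith [hμ n]

end RobbinsSiegmund

theorem measurable_matrix_apply {m n : Type*} (i : m) (j : n) :
    Measurable fun w : Matrix m n ℝ => w i j :=
  (measurable_pi_apply j).comp (measurable_pi_apply i)

theorem measurable_mulVec_apply {ι κ : Type*} [Fintype κ] (Z : Matrix ι κ ℝ) (i : ι) :
    Measurable fun x : κ → ℝ => (Z *ᵥ x) i := by
  fun_prop

theorem IntM.vecMulVec_const_add {Ω ι : Type*} [MeasurableSpace Ω] {P : Measure Ω}
    [IsFiniteMeasure P] {X Y : Ω → ι → ℝ} (a b : ι → ℝ) (hX : IntV P X) (hY : IntV P Y)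
    (hXY : IntM P fun ω => vecMulVec (X ω) (Y ω)) :
    IntM P fun ω => vecMulVec (a + X ω) (b + Y ω) := by
  intro k l
  have hexp : (fun ω => vecMulVec (a + X ω) (b + Y ω) k l) =
      fun ω => a k * b l + a k * Y ω l + b l * X ω k + vecMulVec (X ω) (Y ω) k l := by
    ext ω; simp only [vecMulVec_apply, Pi.add_apply]; ring
  rw [hexp]
  exact (((integrable_const _).add ((hY l).const_mul _)).add ((hX k).const_mul _)).add (hXY k l)

section SecondMoments

variable {Ω : Type*} [MeasurableSpace Ω] {P : Measure Ω} {ι : Type*} [Fintype ι]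
  {X : Ω → ι → ℝ}

theorem integrable_dotProduct_self (hXX : IntM P fun ω => vecMulVec (X ω) (X ω)) :
    Integrable (fun ω => X ω ⬝ᵥ X ω) P :=
  integrable_finsetSum _ fun i _ => by simpa [vecMulVec_apply] using hXX i i

theorem integral_dotProduct_self_nonneg : 0 ≤ ∫ ω, X ω ⬝ᵥ X ω ∂P :=
  integral_nonneg fun ω => dotProduct_self_nonneg (X ω)

theorem integral_dotProduct_self (hXX : IntM P fun ω => vecMulVec (X ω) (X ω)) :
    ∫ ω, X ω ⬝ᵥ X ω ∂P = ∑ i, Emat P (fun ω => vecMulVec (X ω) (X ω)) i i := by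
  simp only [dotProduct, Emat, of_apply, vecMulVec_apply]
  exact integral_finsetSum _ fun i _ => by simpa [vecMulVec_apply] using hXX i i

theorem abs_Emat_vecMulVec_self_le (hXX : IntM P fun ω => vecMulVec (X ω) (X ω)) (i j : ι) :
    |Emat P (fun ω => vecMulVec (X ω) (X ω)) i j| ≤ ∫ ω, X ω ⬝ᵥ X ω ∂P :=
  calc |∫ ω, X ω i * X ω j ∂P| ≤ ∫ ω, |X ω i * X ω j| ∂P := abs_integral_le_integral_abs
    _ ≤ ∫ ω, X ω ⬝ᵥ X ω ∂P :=
        integral_mono (by simpa [vecMulVec_apply] using (hXX i j).abs)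
          (integrable_dotProduct_self hXX) fun ω => abs_mul_le_dotProduct_self _ _ _

theorem integral_dotProduct_self_le (hXX : IntM P fun ω => vecMulVec (X ω) (X ω)) :
    ∫ ω, X ω ⬝ᵥ X ω ∂P ≤ Fintype.card ι * frobNorm (Emat P fun ω => vecMulVec (X ω) (X ω)) := by
  rw [integral_dotProduct_self hXX, ← nsmul_eq_mul, ← Finset.card_univ]
  exact Finset.sum_le_card_nsmul _ _ _ fun i _ => (le_abs_self _).trans (abs_le_frobNorm _ i i)

theorem IntV.mulVec {κ : Type*} (hX : IntV P X) (Z : Matrix κ ι ℝ) :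
    IntV P fun ω => Z *ᵥ X ω := fun k =>
  integrable_finsetSum _ fun j _ => (hX j).const_mul (Z k j)

theorem IntM.vecMulVec_mulVec {κ κ' : Type*} (hXX : IntM P fun ω => vecMulVec (X ω) (X ω))
    (Z : Matrix κ ι ℝ) (Z' : Matrix κ' ι ℝ) :
    IntM P fun ω => vecMulVec (Z *ᵥ X ω) (Z' *ᵥ X ω) := by
  intro k l
  have hexp : (fun ω => vecMulVec (Z *ᵥ X ω) (Z' *ᵥ X ω) k l) =
      fun ω => ∑ i, ∑ j, Z k i * Z' l j * vecMulVec (X ω) (X ω) i j := by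
    ext ω
    simp only [vecMulVec_apply, mulVec, dotProduct, Finset.sum_mul_sum]
    exact Finset.sum_congr rfl fun i _ => Finset.sum_congr rfl fun j _ => by ring
  rw [hexp]
  exact integrable_finsetSum _ fun i _ => integrable_finsetSum _ fun j _ => (hXX i j).const_mul _

end SecondMoments

namespace ProbabilityTheory

variable {Ω α β : Type*} [MeasurableSpace Ω] [MeasurableSpace α] [MeasurableSpace β]
  {P : Measure Ω} {U : Ω → α} {V : Ω → β} {ι κ : Type*} [Fintype ι] [Fintype κ]

theorem IndepFun.integrable_and_integral_comp_mul_comp (hUV : IndepFun U V P) {f : α → ℝ}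
    {g : β → ℝ} (hf : Measurable f) (hg : Measurable g)
    (hfi : Integrable (fun ω => f (U ω)) P) (hgi : Integrable (fun ω => g (V ω)) P) :
    Integrable (fun ω => f (U ω) * g (V ω)) P ∧
      ∫ ω, f (U ω) * g (V ω) ∂P = (∫ ω, f (U ω) ∂P) * ∫ ω, g (V ω) ∂P :=
  ⟨(hUV.comp hf hg).integrable_mul hfi hgi,
    (hUV.comp hf hg).integral_fun_mul_eq_mul_integral hfi.1 hgi.1⟩

theorem IndepFun.integral_dotProduct (hUV : IndepFun U V P) {s : α → ι → ℝ} {p : β → ι → ℝ}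
    (hs : ∀ i, Measurable fun a => s a i) (hp : ∀ i, Measurable fun b => p b i)
    (hsi : IntV P fun ω => s (U ω)) (hpi : IntV P fun ω => p (V ω)) :
    Integrable (fun ω => p (V ω) ⬝ᵥ s (U ω)) P ∧
      ∫ ω, p (V ω) ⬝ᵥ s (U ω) ∂P = Evec P (fun ω => p (V ω)) ⬝ᵥ Evec P fun ω => s (U ω) := by
  have hterm (i : ι) := hUV.symm.integrable_and_integral_comp_mul_comp (hp i) (hs i) (hpi i) (hsi i)
  exact ⟨integrable_finsetSum _ fun i _ => (hterm i).1,
    (integral_finsetSum _ fun i _ => (hterm i).1).trans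
      (Finset.sum_congr rfl fun i _ => (hterm i).2)⟩

theorem IndepFun.integral_dotProduct_mulVec (hUV : IndepFun U V P) {F : α → Matrix ι κ ℝ}
    {p : β → ι → ℝ} {q : β → κ → ℝ} (hF : ∀ i j, Measurable fun a => F a i j)
    (hp : ∀ i, Measurable fun b => p b i) (hq : ∀ j, Measurable fun b => q b j)
    (hFi : IntM P fun ω => F (U ω)) (hpq : IntM P fun ω => vecMulVec (p (V ω)) (q (V ω))) :
    Integrable (fun ω => p (V ω) ⬝ᵥ F (U ω) *ᵥ q (V ω)) P ∧
      ∫ ω, p (V ω) ⬝ᵥ F (U ω) *ᵥ q (V ω) ∂P = ∑ i, ∑ j,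
        Emat P (fun ω => F (U ω)) i j * Emat P (fun ω => vecMulVec (p (V ω)) (q (V ω))) i j := by
  have hterm (i : ι) (j : κ) := hUV.integrable_and_integral_comp_mul_comp
    (g := fun b => p b i * q b j) (hF i j) ((hp i).mul (hq j)) (hFi i j) (hpq i j)
  have hexp (ω : Ω) : p (V ω) ⬝ᵥ F (U ω) *ᵥ q (V ω) =
      ∑ i, ∑ j, F (U ω) i j * (p (V ω) i * q (V ω) j) := by
    simp only [dotProduct, mulVec, Finset.mul_sum]
    exact Finset.sum_congr rfl fun i _ => Finset.sum_congr rfl fun j _ => by ring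
  simp only [hexp]
  refine ⟨integrable_finsetSum _ fun i _ => integrable_finsetSum _ fun j _ => (hterm i j).1, ?_⟩
  rw [integral_finsetSum _ fun i _ => integrable_finsetSum _ fun j _ => (hterm i j).1]
  refine Finset.sum_congr rfl fun i _ => ?_
  rw [integral_finsetSum _ fun j _ => (hterm i j).1]
  exact Finset.sum_congr rfl fun j _ => (hterm i j).2

end ProbabilityTheory

section MeanSquareStep

variable {Ω : Type*} [MeasurableSpace Ω] {P : Measure Ω}

theorem integral_mulVec_dotProduct_sub_mulVec_eq_zero [IsFiniteMeasure P] {ι : Type*} [Fintype ι]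
    {θ : Ω → ι → ℝ} {W : Ω → Matrix ι ι ℝ} {X : Ω → ι → ℝ} (u : ι → ℝ) (Z : Matrix ι ι ℝ)
    (hind : IndepFun (fun ω => (θ ω, W ω)) X P) (hθ : IntV P θ) (hθ0 : Evec P θ = 0)
    (hW : IntM P W) (hW0 : Emat P W = 0) (hX : IntV P X)
    (hXX : IntM P fun ω => vecMulVec (X ω) (X ω)) :
    Integrable (fun ω => Z *ᵥ X ω ⬝ᵥ (θ ω - W ω *ᵥ (u + X ω))) P ∧
      ∫ ω, Z *ᵥ X ω ⬝ᵥ (θ ω - W ω *ᵥ (u + X ω)) ∂P = 0 := by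
  have hθpart := hind.integral_dotProduct (s := fun a => a.1) (p := fun x => Z *ᵥ x)
    (fun i => (measurable_pi_apply i).comp measurable_fst) (measurable_mulVec_apply Z) hθ
    (hX.mulVec Z)
  have hZXY : IntM P fun ω => vecMulVec (Z *ᵥ X ω) (u + X ω) := by
    classical
    have hZX := hXX.vecMulVec_mulVec Z (1 : Matrix ι ι ℝ)
    simp only [one_mulVec] at hZX
    simpa using IntM.vecMulVec_const_add 0 u (hX.mulVec Z) hX hZX
  have hWpart := hind.integral_dotProduct_mulVec (F := fun a => a.2) (p := fun x => Z *ᵥ x)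
    (q := fun x => u + x) (fun i j => (measurable_matrix_apply i j).comp measurable_snd)
    (measurable_mulVec_apply Z) (fun j => measurable_const.add (measurable_pi_apply j)) hW hZXY
  simp only [dotProduct_sub]
  refine ⟨hθpart.1.sub hWpart.1, ?_⟩
  rw [integral_sub hθpart.1 hWpart.1, hθpart.2, hWpart.2, hθ0, hW0]
  simp

theorem integral_mulVec_dotProduct_mulVec_le {M : ℕ} {W : Ω → Matrix (Fin M) (Fin M) ℝ}
    {Y : Ω → Fin M → ℝ} (hind : IndepFun W Y P)
    (hWW : IntM P fun ω => vecOuter (W ω) (W ω)) (hYY : IntM P fun ω => vecMulVec (Y ω) (Y ω)) :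
    Integrable (fun ω => W ω *ᵥ Y ω ⬝ᵥ W ω *ᵥ Y ω) P ∧
      ∫ ω, W ω *ᵥ Y ω ⬝ᵥ W ω *ᵥ Y ω ∂P ≤
        M ^ 3 * frobNorm (Emat P fun ω => vecOuter (W ω) (W ω)) * ∫ ω, Y ω ⬝ᵥ Y ω ∂P := by
  set σ := frobNorm (Emat P fun ω => vecOuter (W ω) (W ω))
  have hentry (c d : Fin M) : (fun ω => ((W ω)ᵀ * W ω) c d) =
      fun ω => ∑ b, vecOuter (W ω) (W ω) (b, c) (b, d) := by
    ext ω; simp [mul_apply, vecOuter]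
  have hWtW : IntM P fun ω => (W ω)ᵀ * W ω := fun c d => by
    rw [hentry]; exact integrable_finsetSum _ fun b _ => hWW _ _
  have hEWtW (c d : Fin M) : |Emat P (fun ω => (W ω)ᵀ * W ω) c d| ≤ M * σ := by
    simp only [Emat, of_apply]
    rw [hentry, integral_finsetSum _ fun b _ => hWW _ _]
    calc _ ≤ ∑ b, |∫ ω, vecOuter (W ω) (W ω) (b, c) (b, d) ∂P| := Finset.abs_sum_le_sum_abs _ _
      _ ≤ ∑ _b : Fin M, σ := Finset.sum_le_sum fun b _ =>
          abs_le_frobNorm (Emat P fun ω => vecOuter (W ω) (W ω)) (b, c) (b, d)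
      _ = M * σ := by simp
  have hσ : 0 ≤ M * σ := mul_nonneg M.cast_nonneg (frobNorm_nonneg _)
  obtain ⟨hint, heq⟩ := hind.integral_dotProduct_mulVec (F := fun w => wᵀ * w) (p := id)
    (q := id) (fun c d => by simp only [mul_apply, transpose_apply]; fun_prop)
    measurable_pi_apply measurable_pi_apply hWtW hYY
  simp only [id] at hint heq
  simp only [mulVec_dotProduct_mulVec_eq]
  refine ⟨hint, heq.trans_le ?_⟩
  calc ∑ c, ∑ d, Emat P (fun ω => (W ω)ᵀ * W ω) c d * Emat P (fun ω => vecMulVec (Y ω) (Y ω)) c d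
      ≤ ∑ _c : Fin M, ∑ _d : Fin M, M * σ * ∫ ω, Y ω ⬝ᵥ Y ω ∂P := by
        refine Finset.sum_le_sum fun c _ => Finset.sum_le_sum fun d _ => ?_
        exact (le_abs_self _).trans <| (abs_mul _ _).trans_le <|
          mul_le_mul (hEWtW c d) (abs_Emat_vecMulVec_self_le hYY c d) (abs_nonneg _) hσ
    _ = M ^ 3 * σ * ∫ ω, Y ω ⬝ᵥ Y ω ∂P := by simp; ring

theorem integral_const_add_dotProduct_le [IsProbabilityMeasure P] {ι : Type*} [Fintype ι]
    {X : Ω → ι → ℝ} (u : ι → ℝ) (hX : IntV P X) (hXX : IntM P fun ω => vecMulVec (X ω) (X ω)) :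
    ∫ ω, (u + X ω) ⬝ᵥ (u + X ω) ∂P ≤ 2 * (u ⬝ᵥ u) + 2 * ∫ ω, X ω ⬝ᵥ X ω ∂P := by
  have hXint := integrable_dotProduct_self hXX
  calc ∫ ω, (u + X ω) ⬝ᵥ (u + X ω) ∂P ≤ ∫ ω, 2 * (u ⬝ᵥ u) + 2 * (X ω ⬝ᵥ X ω) ∂P :=
        integral_mono (integrable_dotProduct_self (IntM.vecMulVec_const_add u u hX hX hXX))
          ((integrable_const _).add (hXint.const_mul 2)) fun ω => add_dotProduct_add_le u (X ω)
    _ = 2 * (u ⬝ᵥ u) + 2 * ∫ ω, X ω ⬝ᵥ X ω ∂P := by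
        rw [integral_add (integrable_const _) (hXint.const_mul 2), integral_const,
          integral_const_mul]
        simp

theorem integral_dotProduct_self_le_of_eq_add [IsProbabilityMeasure P] {M : ℕ}
    {θ X e : Ω → Fin M → ℝ} {W : Ω → Matrix (Fin M) (Fin M) ℝ}
    {G Ψ : Matrix (Fin M) (Fin M) ℝ} {u : Fin M → ℝ} {μ ρ : ℝ}
    (hind : IndepFun (fun ω => (θ ω, W ω)) X P) (hθ : IntV P θ) (hθ0 : Evec P θ = 0)
    (hW : IntM P W) (hW0 : Emat P W = 0) (hθθ : IntM P fun ω => vecMulVec (θ ω) (θ ω))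
    (hWW : IntM P fun ω => vecOuter (W ω) (W ω)) (hX : IntV P X)
    (hXX : IntM P fun ω => vecMulVec (X ω) (X ω)) (hee : IntM P fun ω => vecMulVec (e ω) (e ω))
    (hG : ∀ x, G *ᵥ x ⬝ᵥ G *ᵥ x ≤ ρ * (x ⬝ᵥ x))
    (he : ∀ ω, e ω = G *ᵥ X ω + μ • Ψ *ᵥ (θ ω - W ω *ᵥ (u + X ω))) :
    ∫ ω, e ω ⬝ᵥ e ω ∂P ≤ ρ * ∫ ω, X ω ⬝ᵥ X ω ∂P + μ ^ 2 * frobNorm Ψ ^ 2 *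
      (2 * (M * frobNorm (Emat P fun ω => vecMulVec (θ ω) (θ ω))) +
        2 * (M ^ 3 * frobNorm (Emat P fun ω => vecOuter (W ω) (W ω)) *
          (2 * (u ⬝ᵥ u) + 2 * ∫ ω, X ω ⬝ᵥ X ω ∂P))) := by
  set Y : Ω → Fin M → ℝ := fun ω => u + X ω
  have hYY : IntM P fun ω => vecMulVec (Y ω) (Y ω) := IntM.vecMulVec_const_add u u hX hX hXX
  have hXint := integrable_dotProduct_self hXX
  have hθint := integrable_dotProduct_self hθθ
  have hYint := integral_const_add_dotProduct_le u hX hXX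
  have hθbound := integral_dotProduct_self_le hθθ
  rw [Fintype.card_fin] at hθbound
  obtain ⟨hcross, hcross0⟩ :=
    integral_mulVec_dotProduct_sub_mulVec_eq_zero u (Ψᵀ * G) hind hθ hθ0 hW hW0 hX hXX
  have hWYind : IndepFun W Y P := hind.comp measurable_snd (measurable_const_add u)
  obtain ⟨hWY, hWYbound⟩ := integral_mulVec_dotProduct_mulVec_le hWYind hWW hYY
  have hpt (ω : Ω) : e ω ⬝ᵥ e ω ≤ ρ * (X ω ⬝ᵥ X ω) +
      2 * μ * ((Ψᵀ * G) *ᵥ X ω ⬝ᵥ (θ ω - W ω *ᵥ Y ω)) + μ ^ 2 * frobNorm Ψ ^ 2 *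
        (2 * (θ ω ⬝ᵥ θ ω) + 2 * (W ω *ᵥ Y ω ⬝ᵥ W ω *ᵥ Y ω)) := by
    have hξ := sub_dotProduct_sub_le (θ ω) (W ω *ᵥ Y ω)
    rw [he ω]
    refine (add_smul_mulVec_dotProduct_le G Ψ (X ω) _ (hG (X ω))).trans ?_
    rw [mul_assoc (μ ^ 2)]
    gcongr
  have hint_noise : Integrable (fun ω => 2 * (θ ω ⬝ᵥ θ ω) + 2 * (W ω *ᵥ Y ω ⬝ᵥ W ω *ᵥ Y ω)) P :=
    (hθint.const_mul 2).add (hWY.const_mul 2)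
  have hint_main : Integrable (fun ω => ρ * (X ω ⬝ᵥ X ω) +
      2 * μ * ((Ψᵀ * G) *ᵥ X ω ⬝ᵥ (θ ω - W ω *ᵥ Y ω))) P :=
    (hXint.const_mul ρ).add (hcross.const_mul _)
  calc ∫ ω, e ω ⬝ᵥ e ω ∂P
      ≤ ∫ ω, ρ * (X ω ⬝ᵥ X ω) + 2 * μ * ((Ψᵀ * G) *ᵥ X ω ⬝ᵥ (θ ω - W ω *ᵥ Y ω)) +
          μ ^ 2 * frobNorm Ψ ^ 2 * (2 * (θ ω ⬝ᵥ θ ω) + 2 * (W ω *ᵥ Y ω ⬝ᵥ W ω *ᵥ Y ω)) ∂P :=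
        integral_mono (integrable_dotProduct_self hee)
          (hint_main.add (hint_noise.const_mul _)) hpt
    _ = ρ * ∫ ω, X ω ⬝ᵥ X ω ∂P + μ ^ 2 * frobNorm Ψ ^ 2 *
          (2 * ∫ ω, θ ω ⬝ᵥ θ ω ∂P + 2 * ∫ ω, W ω *ᵥ Y ω ⬝ᵥ W ω *ᵥ Y ω ∂P) := by
        rw [integral_add hint_main (hint_noise.const_mul _),
          integral_add (hXint.const_mul ρ) (hcross.const_mul _), integral_const_mul,
          integral_const_mul, integral_const_mul, hcross0,
          integral_add (hθint.const_mul 2) (hWY.const_mul 2), integral_const_mul,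
          integral_const_mul]
        ring
    _ ≤ _ := by
        have hWW0 := frobNorm_nonneg (Emat P fun ω => vecOuter (W ω) (W ω))
        gcongr
        exact hWYbound.trans (by gcongr)

theorem integral_dotProduct_self_le_of_recursion [IsProbabilityMeasure P] {M : ℕ}
    {θ X e : Ω → Fin M → ℝ} {W : Ω → Matrix (Fin M) (Fin M) ℝ} {A Ψ : Matrix (Fin M) (Fin M) ℝ}
    {u : Fin M → ℝ} {μ c L R σθ σW : ℝ}
    (hind : IndepFun (fun ω => (θ ω, W ω)) X P) (hθ : IntV P θ) (hθ0 : Evec P θ = 0)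
    (hW : IntM P W) (hW0 : Emat P W = 0) (hθθ : IntM P fun ω => vecMulVec (θ ω) (θ ω))
    (hWW : IntM P fun ω => vecOuter (W ω) (W ω)) (hX : IntV P X)
    (hXX : IntM P fun ω => vecMulVec (X ω) (X ω)) (hee : IntM P fun ω => vecMulVec (e ω) (e ω))
    (hσθ : frobNorm (Emat P fun ω => vecMulVec (θ ω) (θ ω)) ≤ σθ)
    (hσW : frobNorm (Emat P fun ω => vecOuter (W ω) (W ω)) ≤ σW)
    (hcoer : ∀ x, c * (x ⬝ᵥ x) ≤ x ⬝ᵥ (Ψ * A) *ᵥ x) (hL : frobNorm (Ψ * A) ≤ L)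
    (hR : frobNorm Ψ ≤ R) (hμ : 0 < μ) (hμc : μ * (L ^ 2 + 8 * M ^ 3 * R ^ 2 * σW + 1) ≤ c)
    (he : ∀ ω, e ω = (1 - μ • (Ψ * (A + W ω))) *ᵥ X ω + μ • Ψ *ᵥ (θ ω - W ω *ᵥ u)) :
    ∫ ω, e ω ⬝ᵥ e ω ∂P ≤ (1 - c / 2 * μ) * ∫ ω, X ω ⬝ᵥ X ω ∂P +
      R ^ 2 * (2 * M * σθ + 4 * M ^ 3 * σW * (u ⬝ᵥ u)) * μ ^ 2 := by
  have hσW0 := (frobNorm_nonneg _).trans hσW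
  have hX0 : 0 ≤ ∫ ω, X ω ⬝ᵥ X ω ∂P := integral_dotProduct_self_nonneg
  have hnoise : 0 ≤ μ * (8 * M ^ 3 * R ^ 2 * σW) := mul_nonneg hμ.le (by positivity)
  have hμL : μ * L ^ 2 + μ * (8 * M ^ 3 * R ^ 2 * σW) ≤ c := by linarith
  have hμA : μ * frobNorm (Ψ * A) ^ 2 ≤ c := by
    nlinarith [mul_le_mul_of_nonneg_left (pow_le_pow_left₀ (frobNorm_nonneg _) hL 2) hμ.le]
  have hcontr (x : Fin M → ℝ) := one_sub_smul_mulVec_dotProduct_le (Ψ * A) x (hcoer x) hμ.le hμA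
  have hstep := integral_dotProduct_self_le_of_eq_add hind hθ hθ0 hW hW0 hθθ hWW hX hXX hee
    hcontr fun ω => (he ω).trans (one_sub_smul_mul_add_mulVec_eq A Ψ (W ω) (X ω) (θ ω) u μ)
  have hΨ := pow_le_pow_left₀ (frobNorm_nonneg Ψ) hR 2
  refine hstep.trans ?_
  have hu := dotProduct_self_nonneg u
  -- the part `4 M³ R² σW μ² E‖X‖²` of the noise is absorbed by half of the contraction
  calc _ ≤ (1 - μ * c) * ∫ ω, X ω ⬝ᵥ X ω ∂P + μ ^ 2 * R ^ 2 *
        (2 * (M * σθ) + 2 * (M ^ 3 * σW * (2 * (u ⬝ᵥ u) + 2 * ∫ ω, X ω ⬝ᵥ X ω ∂P))) := by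
        have hθθ0 := frobNorm_nonneg (Emat P fun ω => vecMulVec (θ ω) (θ ω))
        have hWW0 := frobNorm_nonneg (Emat P fun ω => vecOuter (W ω) (W ω))
        gcongr
    _ = (1 - μ * c) * ∫ ω, X ω ⬝ᵥ X ω ∂P + μ * (μ * (8 * M ^ 3 * R ^ 2 * σW)) / 2 *
        ∫ ω, X ω ⬝ᵥ X ω ∂P + R ^ 2 * (2 * M * σθ + 4 * M ^ 3 * σW * (u ⬝ᵥ u)) * μ ^ 2 := by
        ring
    _ ≤ (1 - μ * c) * ∫ ω, X ω ⬝ᵥ X ω ∂P + μ * c / 2 * ∫ ω, X ω ⬝ᵥ X ω ∂P +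
        R ^ 2 * (2 * M * σθ + 4 * M ^ 3 * σW * (u ⬝ᵥ u)) * μ ^ 2 := by
        gcongr
        nlinarith [sq_nonneg L]
    _ = _ := by ring

end MeanSquareStep

theorem theorem2_mean_square_convergence_general
    {M : ℕ} {Ω' : Type} [MeasurableSpace Ω'] (P : Measure Ω') [IsProbabilityMeasure P]
    (A B C : Matrix (Fin M) (Fin M) ℝ)
    (hBinv : IsUnit B)
    (hBA : ∀ x : Fin M → ℝ, euclNorm x = 1 → 0 < x ⬝ᵥ (B⁻¹ * A).mulVec x)
    (uhat : Fin M → ℝ)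
    (θ : ℕ → Ω' → Fin M → ℝ) (W : ℕ → Ω' → Matrix (Fin M) (Fin M) ℝ)
    (hθint : ∀ k, IntV P (θ k)) (hθmean : ∀ k, 1 ≤ k → Evec P (θ k) = 0)
    (hWint : ∀ k, IntM P (W k)) (hWmean : ∀ k, 1 ≤ k → Emat P (W k) = 0)
    (hintθθ : ∀ k, 1 ≤ k → IntM P (fun ω => vecMulVec (θ k ω) (θ k ω)))
    (hintΩΩ : ∀ k, 1 ≤ k → IntM P (fun ω => vecOuter (W k ω) (W k ω)))
    (σθθ2 σΩΩ2 : ℝ)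
    (hσθθ : ∀ k, 1 ≤ k → frobNorm (Emat P (fun ω => vecMulVec (θ k ω) (θ k ω))) = σθθ2)
    (hσΩΩ : ∀ k, 1 ≤ k → frobNorm (Emat P (fun ω => vecOuter (W k ω) (W k ω))) = σΩΩ2) :
    ∃ γ₀ : ℝ, 0 < γ₀ ∧ ∃ muhat0 : ℝ, 0 < muhat0 ∧
      ∀ γ : ℝ, 0 ≤ γ → γ ≤ γ₀ →
        IsUnit (B + γ • C) ∧
        ∀ μ : ℕ → ℝ, (∀ k, 1 ≤ k → 0 < μ k ∧ μ k ≤ muhat0) →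
          ¬ Summable (fun k : ℕ => μ (k + 1)) →
          Summable (fun k : ℕ => (μ (k + 1)) ^ 2) →
          ∀ e : ℕ → Ω' → Fin M → ℝ,
            (∀ k, 1 ≤ k → ∀ ω, e k ω =
                (1 - μ k • ((B + γ • C)⁻¹ * (A + W k ω))).mulVec (e (k - 1) ω)
                  + μ k • (B + γ • C)⁻¹.mulVec (θ k ω - (W k ω).mulVec uhat)) →
            (∀ k, 1 ≤ k → IndepFun (fun ω => (θ k ω, W k ω)) (fun ω => e (k - 1) ω) P) →
            (∀ k, IntV P (e k)) →
            (∀ k, IntM P (fun ω => vecMulVec (e k ω) (e k ω))) →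
            (∀ k, 1 ≤ k → IntM P (fun ω =>
                vecMulVec (θ k ω - (W k ω).mulVec uhat) (θ k ω - (W k ω).mulVec uhat))) →
            (∀ k, 1 ≤ k → IntM P (fun ω =>
                W k ω * vecMulVec (e (k - 1) ω) (e (k - 1) ω) * W k ω)) →
            (∀ k, 1 ≤ k → IntM P (fun ω => W k ω * vecMulVec (e (k - 1) ω) (θ k ω))) →
            (∀ k, 1 ≤ k → IntM P (fun ω =>
                W k ω * vecMulVec (e (k - 1) ω) uhat * W k ω)) →
            (∀ k, 1 ≤ k → IntM P (fun ω => vecMulVec (θ k ω) (e (k - 1) ω) * W k ω)) →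
            (∀ k, 1 ≤ k → IntM P (fun ω =>
                W k ω * vecMulVec uhat (e (k - 1) ω) * W k ω)) →
            (∀ k, 1 ≤ k → IntM P (fun ω =>
                vecMulVec (e (k - 1) ω) (θ k ω - (W k ω).mulVec uhat))) →
            (∀ k, 1 ≤ k → IntM P (fun ω =>
                W k ω * vecMulVec (e (k - 1) ω) (e (k - 1) ω))) →
            ∀ i j : Fin M,
              Tendsto (fun k : ℕ => Emat P (fun ω => vecMulVec (e k ω) (e k ω)) i j)
                atTop (nhds 0) := by
  obtain ⟨c, hc, hcoer⟩ := exists_pos_mul_dotProduct_le_dotProduct_mulVec _ hBA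
  obtain ⟨γ₀, hγ₀, L, R, hbounds⟩ := exists_uniform_bounds_inv_add_smul A B C hBinv hc hcoer
  have hD : 0 < L ^ 2 + 8 * M ^ 3 * R ^ 2 * σΩΩ2 + 1 := by
    have := hσΩΩ 1 le_rfl ▸ frobNorm_nonneg _
    positivity
  refine ⟨γ₀, hγ₀, c / 2 / (L ^ 2 + 8 * M ^ 3 * R ^ 2 * σΩΩ2 + 1), by positivity,
    fun γ hγ hγγ₀ => ?_⟩
  obtain ⟨hunit, hcoerγ, hL, hR⟩ := hbounds γ hγ hγγ₀
  refine ⟨hunit, fun μ hμ hdiv hsq e hrec hind heint hesq _ _ _ _ _ _ _ _ i j => ?_⟩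
  have hstep (n : ℕ) := integral_dotProduct_self_le_of_recursion (hind (n + 1) n.succ_pos)
    (hθint _) (hθmean _ n.succ_pos) (hWint _) (hWmean _ n.succ_pos) (hintθθ _ n.succ_pos)
    (hintΩΩ _ n.succ_pos) (heint n) (hesq n) (hesq (n + 1)) (hσθθ _ n.succ_pos).le
    (hσΩΩ _ n.succ_pos).le hcoerγ hL hR (hμ _ n.succ_pos).1
    ((le_div_iff₀ hD).1 (hμ _ n.succ_pos).2) (hrec _ n.succ_pos)
  exact squeeze_zero_norm (fun n => abs_Emat_vecMulVec_self_le (hesq n) i j)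
    (tendsto_zero_of_le_one_sub_mul_add_sq (half_pos (half_pos hc))
      (fun n => integral_dotProduct_self_nonneg) (fun n => (hμ _ n.succ_pos).1.le) hstep hdiv hsq)

/-- Theorem 2: there exist `γ₀ > 0` and `μ̂₀ > 0` such that for every
`γ ∈ [0, γ₀]` (so `B + γC` is invertible) and every step-size sequence with
`0 < μ_k ≤ μ̂₀`, `Σ μ_k = ∞` and `Σ μ_k² < ∞`, the error process satisfies
`lim_k E[e^k (e^k)ᵀ] = 0`. -/
theorem theorem2_mean_square_convergence
    {M : ℕ} {Ω' : Type} [MeasurableSpace Ω'] (P : Measure Ω') [IsProbabilityMeasure P]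
    (A B C : Matrix (Fin M) (Fin M) ℝ)
    (hA : A.PosDef)
    (hBsymm : B.IsSymm) (hBinv : IsUnit B)
    (hBA : ∀ x : Fin M → ℝ, euclNorm x = 1 → 0 < x ⬝ᵥ (B⁻¹ * A).mulVec x)
    (hC : C.PosSemidef)
    (uhat : Fin M → ℝ)
    (θ : ℕ → Ω' → Fin M → ℝ) (W : ℕ → Ω' → Matrix (Fin M) (Fin M) ℝ)
    (hWsymm : ∀ k ω, (W k ω).IsSymm)
    (hθint : ∀ k, IntV P (θ k)) (hθmean : ∀ k, 1 ≤ k → Evec P (θ k) = 0)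
    (hWint : ∀ k, IntM P (W k)) (hWmean : ∀ k, 1 ≤ k → Emat P (W k) = 0)
    (hintθθ : ∀ k, 1 ≤ k → IntM P (fun ω => vecMulVec (θ k ω) (θ k ω)))
    (hintΩΩ : ∀ k, 1 ≤ k → IntM P (fun ω => vecOuter (W k ω) (W k ω)))
    (hintΩθ : ∀ k, 1 ≤ k → IntM P (fun ω => vecOuterVec (W k ω) (θ k ω)))
    (σθθ2 σΩΩ2 σΩθ2 : ℝ)
    (hσθθ : ∀ k, 1 ≤ k → frobNorm (Emat P (fun ω => vecMulVec (θ k ω) (θ k ω))) = σθθ2)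
    (hσΩΩ : ∀ k, 1 ≤ k → frobNorm (Emat P (fun ω => vecOuter (W k ω) (W k ω))) = σΩΩ2)
    (hσΩθ : ∀ k, 1 ≤ k → frobNorm (Emat P (fun ω => vecOuterVec (W k ω) (θ k ω))) = σΩθ2) :
    ∃ γ₀ : ℝ, 0 < γ₀ ∧ ∃ muhat0 : ℝ, 0 < muhat0 ∧
      ∀ γ : ℝ, 0 ≤ γ → γ ≤ γ₀ →
        IsUnit (B + γ • C) ∧
        ∀ μ : ℕ → ℝ, (∀ k, 1 ≤ k → 0 < μ k ∧ μ k ≤ muhat0) →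
          ¬ Summable (fun k : ℕ => μ (k + 1)) →
          Summable (fun k : ℕ => (μ (k + 1)) ^ 2) →
          ∀ e : ℕ → Ω' → Fin M → ℝ,
            (∀ k, 1 ≤ k → ∀ ω, e k ω =
                (1 - μ k • ((B + γ • C)⁻¹ * (A + W k ω))).mulVec (e (k - 1) ω)
                  + μ k • (B + γ • C)⁻¹.mulVec (θ k ω - (W k ω).mulVec uhat)) →
            (∀ k, 1 ≤ k → IndepFun (fun ω => (θ k ω, W k ω)) (fun ω => e (k - 1) ω) P) →
            (∀ k, IntV P (e k)) →
            (∀ k, IntM P (fun ω => vecMulVec (e k ω) (e k ω))) →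
            (∀ k, 1 ≤ k → IntM P (fun ω =>
                vecMulVec (θ k ω - (W k ω).mulVec uhat) (θ k ω - (W k ω).mulVec uhat))) →
            (∀ k, 1 ≤ k → IntM P (fun ω =>
                W k ω * vecMulVec (e (k - 1) ω) (e (k - 1) ω) * W k ω)) →
            (∀ k, 1 ≤ k → IntM P (fun ω => W k ω * vecMulVec (e (k - 1) ω) (θ k ω))) →
            (∀ k, 1 ≤ k → IntM P (fun ω =>
                W k ω * vecMulVec (e (k - 1) ω) uhat * W k ω)) →
            (∀ k, 1 ≤ k → IntM P (fun ω => vecMulVec (θ k ω) (e (k - 1) ω) * W k ω)) →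
            (∀ k, 1 ≤ k → IntM P (fun ω =>
                W k ω * vecMulVec uhat (e (k - 1) ω) * W k ω)) →
            (∀ k, 1 ≤ k → IntM P (fun ω =>
                vecMulVec (e (k - 1) ω) (θ k ω - (W k ω).mulVec uhat))) →
            (∀ k, 1 ≤ k → IntM P (fun ω =>
                W k ω * vecMulVec (e (k - 1) ω) (e (k - 1) ω))) →
            ∀ i j : Fin M,
              Tendsto (fun k : ℕ => Emat P (fun ω => vecMulVec (e k ω) (e k ω)) i j)
                atTop (nhds 0) :=
  theorem2_mean_square_convergence_general P A B C hBinv hBA uhat θ W hθint hθmean hWint hWmean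
    hintθθ hintΩΩ σθθ2 σΩΩ2 hσθθ hσΩΩ
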